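/- Fix r ∈ (0,1). The function g ↦ (1 − 2g(1−r))² − E(4g r²/(1+r⁴))² is strictly decreasing on [0,1/2). (This is the monogamy score M₁ = E_s² − E₁₂² − E₁₃² − E₂₃² of the non-generic GHZ-class state ψ(g₁,0,0,r): here E_s = 1 − 2g₁(1−r), E₁₂ = E₁₃ = 0 and E₂₃ = E(4g₁r²/(1+r⁴)).) -/

import Mathlib

/-!
The first term `(1 - 2g(1-r))²` is strictly decreasing in `g` while its base stays positive, which
is the case for `g < 1/2`. The subtracted term `E(C)²` is nondecreasing in `g`: the concurrence
`C = 4gr²/(1+r⁴)` grows with `g`, and `E` is nondecreasing and nonnegative on `C ≥ 0` because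
`(1 + √(1 - C²))/2` decreases within `[1/2, 1]`, where the binary entropy is decreasing.
-/

/-- Binary Shannon entropy (base 2), with the convention `0 * log₂ 0 = 0`
(automatic since `Real.logb 2 0 = 0`). -/
noncomputable def binEntropy (p : ℝ) : ℝ :=
  -p * Real.logb 2 p - (1 - p) * Real.logb 2 (1 - p)

/-- Entanglement-of-formation function of the concurrence `C`. -/
noncomputable def eof (C : ℝ) : ℝ :=
  binEntropy ((1 + Real.sqrt (1 - C ^ 2)) / 2)

open Set

lemma binEntropy_eq_div_log_two (p : ℝ) : binEntropy p = Real.binEntropy p / Real.log 2 := by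
  simp only [binEntropy, Real.binEntropy, Real.logb, Real.log_inv]
  ring

lemma one_add_sqrt_one_sub_sq_div_two_mem_Icc (C : ℝ) :
    (1 + √(1 - C ^ 2)) / 2 ∈ Icc (2⁻¹ : ℝ) 1 := by
  have h0 : 0 ≤ √(1 - C ^ 2) := Real.sqrt_nonneg _
  have h1 : √(1 - C ^ 2) ≤ 1 := Real.sqrt_le_one.mpr (by nlinarith)
  constructor <;> linarith

lemma eof_nonneg (C : ℝ) : 0 ≤ eof C := by
  obtain ⟨hp0, hp1⟩ := one_add_sqrt_one_sub_sq_div_two_mem_Icc C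
  rw [eof, binEntropy_eq_div_log_two]
  have := Real.binEntropy_nonneg (by linarith) hp1
  positivity

lemma eof_monotoneOn : MonotoneOn eof (Ici 0) := by
  intro C hC D _ hCD
  have hsqrt : √(1 - D ^ 2) ≤ √(1 - C ^ 2) :=
    Real.sqrt_le_sqrt (by nlinarith [mem_Ici.mp hC])
  rw [eof, eof, binEntropy_eq_div_log_two, binEntropy_eq_div_log_two]
  gcongr ?_ / _
  exact Real.binEntropy_strictAntiOn.antitoneOn
    (one_add_sqrt_one_sub_sq_div_two_mem_Icc D) (one_add_sqrt_one_sub_sq_div_two_mem_Icc C)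
    (by linarith)

lemma sq_eof_monotoneOn : MonotoneOn (fun C => eof C ^ 2) (Ici 0) :=
  fun _ hC _ hD hCD => pow_le_pow_left₀ (eof_nonneg _) (eof_monotoneOn hC hD hCD) 2

/-- For fixed `r ∈ (0,1)`, the monogamy score
`g ↦ (1 - 2g(1-r))² - E(4gr²/(1+r⁴))²` of the non-generic GHZ-class state
`ψ(g,0,0,r)` is strictly decreasing on `[0,1/2)`. -/
theorem monogamy_score_strictAnti (r : ℝ) (hr : r ∈ Set.Ioo (0 : ℝ) 1) :
    StrictAntiOn
      (fun g : ℝ => (1 - 2 * g * (1 - r)) ^ 2 - (eof (4 * g * r ^ 2 / (1 + r ^ 4))) ^ 2)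
      (Set.Ico (0 : ℝ) (1 / 2)) := by
  obtain ⟨hr0, hr1⟩ := hr
  intro a ⟨ha0, _⟩ b ⟨_, hb1⟩ hab
  have hsource : (1 - 2 * b * (1 - r)) ^ 2 < (1 - 2 * a * (1 - r)) ^ 2 :=
    pow_lt_pow_left₀ (by nlinarith) (by nlinarith) two_ne_zero
  have hconcurrence : 4 * a * r ^ 2 / (1 + r ^ 4) ≤ 4 * b * r ^ 2 / (1 + r ^ 4) := by
    gcongr
  have hentanglement :=
    sq_eof_monotoneOn (mem_Ici.mpr (by positivity)) (mem_Ici.mpr (by positivity)) hconcurrence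
  beta_reduce
  linarith
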